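/- arXiv:2403.06715 — 4 statements merged into one kernel-verified Lean document; each statement's English description precedes it below -/
import Mathlib

section
/- For every δ > 0 and every z > γ_δ, one has φ(z − log p_δ⁻¹(z)) − φ(z) > 0, so that Ψ_δ(z) := e^{−z} / (φ(z − log p_δ⁻¹(z)) − φ(z)) is well defined, finite and strictly positive on (γ_δ, ∞). -/
/-! With `p y = 1 + δ / y + log y` and `γ = min (1 + δ) (2 + log δ)`, both `q γ` and `q z` lie in
`[max δ 1, ∞)`, where `p` is monotone, so `p (q γ) = γ < z = p (q z)` forces `q z > q γ ≥ 1`.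
Hence `z - log (q z) = 1 + δ / q z` lies in `(0, z)`, and `φ` is strictly decreasing on `(0, ∞)`
because its integrand is positive there. -/

open MeasureTheory Set Real

theorem one_add_div_add_log_monotoneOn {δ : ℝ} (hδ : 0 < δ) :
    MonotoneOn (fun y => 1 + δ / y + log y) (Ici δ) := by
  intro a (ha : δ ≤ a) b (hb : δ ≤ b) hab
  have ha0 : 0 < a := hδ.trans_le ha
  have hb0 : 0 < b := hδ.trans_le hb
  have hlog : 1 - a / b ≤ log b - log a := by
    simpa [log_div hb0.ne' ha0.ne'] using one_sub_inv_le_log_of_pos (div_pos hb0 ha0)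
  have hkey : 0 ≤ 1 - a / b + δ / b - δ / a := by
    have : 1 - a / b + δ / b - δ / a = (b - a) * (a - δ) / (a * b) := by field_simp; ring
    rw [this]
    exact div_nonneg (mul_nonneg (sub_nonneg.2 hab) (sub_nonneg.2 ha)) (by positivity)
  simp only
  linarith

theorem integrableOn_one_div_mul_exp_Ioi {a : ℝ} (ha : 0 < a) :
    IntegrableOn (fun u => 1 / (u * exp u)) (Ioi a) := by
  refine Integrable.mono' ((exp_neg_integrableOn_Ioi a one_pos).const_mul a⁻¹) ?_ ?_
  · refine ContinuousOn.aestronglyMeasurable ?_ measurableSet_Ioi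
    refine continuousOn_const.div (continuousOn_id.mul continuousOn_exp) fun u hu => ?_
    have : 0 < u := ha.trans hu
    positivity
  · filter_upwards [ae_restrict_mem measurableSet_Ioi] with u (hu : a < u)
    have hu0 : 0 < u := ha.trans hu
    rw [norm_of_nonneg (by positivity), neg_mul, one_mul, exp_neg, one_div, mul_inv]
    gcongr

theorem setIntegral_Ioi_sub_setIntegral_Ioi_pos {f : ℝ → ℝ} {a b : ℝ} (hab : a < b)
    (hf : IntegrableOn f (Ioi a)) (hpos : ∀ x ∈ Ioi a, 0 < f x) :
    0 < (∫ x in Ioi a, f x) - ∫ x in Ioi b, f x := by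
  rw [intervalIntegral.integral_Ioi_sub_Ioi hf hab.le]
  refine intervalIntegral.intervalIntegral_pos_of_pos_on ?_ (fun x hx => hpos x hx.1) hab
  exact (intervalIntegrable_iff_integrableOn_Ioc_of_le hab.le).2 (hf.mono_set Ioc_subset_Ioi_self)

theorem stmt_5_general (δ : ℝ) (hδ : 0 < δ)
    (φ : ℝ → ℝ) (hφ : ∀ x : ℝ, φ x = ∫ u in Set.Ioi x, 1 / (u * Real.exp u))
    (q : ℝ → ℝ)
    (hq₂ : ∀ z : ℝ, min (1 + δ) (2 + Real.log δ) ≤ z →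
      max δ 1 ≤ q z ∧ 1 + δ / q z + Real.log (q z) = z) :
    ∀ z : ℝ, min (1 + δ) (2 + Real.log δ) < z →
      0 < φ (z - Real.log (q z)) - φ z ∧
      0 < Real.exp (-z) / (φ (z - Real.log (q z)) - φ z) := by
  intro z hz
  obtain ⟨hw_ge, hw_eq⟩ := hq₂ _ le_rfl
  obtain ⟨hy_ge, hy_eq⟩ := hq₂ z hz.le
  have hy_gt : q (min (1 + δ) (2 + log δ)) < q z :=
    (one_add_div_add_log_monotoneOn hδ).reflect_lt (le_of_max_le_left hw_ge)
      (le_of_max_le_left hy_ge) (by simpa only [hw_eq, hy_eq] using hz)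
  have hy_one : 1 < q z := (le_of_max_le_right hw_ge).trans_lt hy_gt
  have hx_pos : 0 < z - log (q z) := by
    rw [show z - log (q z) = 1 + δ / q z by linarith]
    have : 0 < q z := one_pos.trans hy_one
    positivity
  have hφ_pos : 0 < φ (z - log (q z)) - φ z := by
    rw [hφ, hφ]
    refine setIntegral_Ioi_sub_setIntegral_Ioi_pos (sub_lt_self z (log_pos hy_one))
      (integrableOn_one_div_mul_exp_Ioi hx_pos) fun u (hu : _ < u) => ?_
    have : 0 < u := hx_pos.trans hu
    positivity
  exact ⟨hφ_pos, div_pos (exp_pos _) hφ_pos⟩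

theorem stmt_5 (δ : ℝ) (hδ : 0 < δ)
    (φ : ℝ → ℝ) (hφ : ∀ x : ℝ, φ x = ∫ u in Set.Ioi x, 1 / (u * Real.exp u))
    (q : ℝ → ℝ)
    (hq₁ : ∀ y : ℝ, max δ 1 ≤ y → q (1 + δ / y + Real.log y) = y)
    (hq₂ : ∀ z : ℝ, min (1 + δ) (2 + Real.log δ) ≤ z →
      max δ 1 ≤ q z ∧ 1 + δ / q z + Real.log (q z) = z) :
    ∀ z : ℝ, min (1 + δ) (2 + Real.log δ) < z →
      0 < φ (z - Real.log (q z)) - φ z ∧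
      0 < Real.exp (-z) / (φ (z - Real.log (q z)) - φ z) :=
  stmt_5_general δ hδ φ hφ q hq₂
end

section
/- For every δ > 0 the function g_δ(z) := 1/z + δ · p_δ⁻¹(z)² / (p_δ⁻¹(z)² − δ²) is strictly positive and (weakly) decreasing on (γ_δ, ∞). -/
/- STATEMENT 6: For every δ > 0 the function
g_δ(z) = 1/z + δ · p_δ⁻¹(z)² / (p_δ⁻¹(z)² − δ²) is strictly positive and (weakly)
decreasing on (γ_δ, ∞). -/
theorem stmt_6 (δ : ℝ) (hδ : 0 < δ) (q : ℝ → ℝ)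
    (hq₁ : ∀ y : ℝ, max δ 1 ≤ y → q (1 + δ / y + Real.log y) = y)
    (hq₂ : ∀ z : ℝ, min (1 + δ) (2 + Real.log δ) ≤ z →
      max δ 1 ≤ q z ∧ 1 + δ / q z + Real.log (q z) = z)
    (g : ℝ → ℝ)
    (hg : ∀ z : ℝ, g z = 1 / z + δ * q z ^ 2 / (q z ^ 2 - δ ^ 2)) :
    (∀ z : ℝ, min (1 + δ) (2 + Real.log δ) < z → 0 < g z) ∧
    AntitoneOn g (Set.Ioi (min (1 + δ) (2 + Real.log δ))) := by
  have hlogle : Real.log δ ≤ δ - 1 := Real.log_le_sub_one_of_pos hδ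
  have hmin : min (1 + δ) (2 + Real.log δ) = 2 + Real.log δ := by
    apply min_eq_right; linarith
  rcases lt_or_ge δ 1 with h1 | h1
  · -- degenerate case: hypotheses contradictory
    exfalso
    obtain ⟨hge, heq⟩ := hq₂ (2 + Real.log δ) (by rw [hmin])
    set y := q (2 + Real.log δ) with hy
    have hy1 : (1:ℝ) ≤ y := le_trans (le_max_right δ 1) hge
    have hy0 : (0:ℝ) < y := by linarith
    have hlogy : 1 - 1/y ≤ Real.log y := by
      have := Real.log_le_sub_one_of_pos (show (0:ℝ) < 1/y by positivity)
      rw [Real.log_div one_ne_zero hy0.ne', Real.log_one] at this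
      linarith
    have hlt : Real.log δ < δ - 1 := Real.log_lt_sub_one_of_pos hδ h1.ne
    -- show 1 + δ/y + log y ≥ 1 + δ
    have hkey : δ ≤ δ / y + Real.log y := by
      have h2 : δ / y + (1 - 1/y) - δ = (y - 1) * (1 - δ) / y := by
        field_simp; ring
      nlinarith [mul_nonneg (sub_nonneg.mpr hy1) (sub_nonneg.mpr h1.le),
        div_nonneg (mul_nonneg (sub_nonneg.mpr hy1) (sub_nonneg.mpr h1.le)) hy0.le]
    linarith
  · -- main case δ ≥ 1
    have hmax : max δ 1 = δ := max_eq_left h1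
    have hlogδ : 0 ≤ Real.log δ := Real.log_nonneg h1
    set γ := 2 + Real.log δ with hγ
    have hγ2 : (2:ℝ) ≤ γ := by simp [hγ]; linarith
    -- q z > δ for z > γ
    have hqδ : ∀ z : ℝ, γ < z → δ < q z := by
      intro z hz
      obtain ⟨hge, heq⟩ := hq₂ z (by rw [hmin]; exact hz.le)
      rw [hmax] at hge
      rcases lt_or_eq_of_le hge with h | h
      · exact h
      · exfalso
        rw [← h, div_self hδ.ne'] at heq
        rw [hγ] at hz; linarith
    -- strict monotonicity of p on (δ, ∞)
    have hp : ∀ a b : ℝ, δ < a → a < b →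
        1 + δ / a + Real.log a < 1 + δ / b + Real.log b := by
      intro a b ha hab
      have ha0 : 0 < a := lt_trans hδ ha
      have hb0 : 0 < b := lt_trans ha0 hab
      have hlog : Real.log a - Real.log b ≤ a / b - 1 := by
        have := Real.log_le_sub_one_of_pos (show 0 < a/b by positivity)
        rw [Real.log_div ha0.ne' hb0.ne'] at this
        linarith
      have key : δ / a - δ / b < 1 - a / b := by
        have e1 : δ / a - δ / b = δ * (b - a) / (a * b) := by field_simp
        have e2 : 1 - a / b = (b - a) / b := by field_simp
        rw [e1, e2, div_lt_div_iff₀ (by positivity) hb0]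
        nlinarith [mul_pos (mul_pos (sub_pos.mpr hab) hb0) (sub_pos.mpr ha)]
      linarith
    -- q monotone on (γ, ∞)
    have hqmono : ∀ z₁ z₂ : ℝ, γ < z₁ → z₁ ≤ z₂ → q z₁ ≤ q z₂ := by
      intro z₁ z₂ hz₁ hz₁₂
      by_contra hc
      push_neg at hc
      have hd2 : δ < q z₂ := hqδ z₂ (lt_of_lt_of_le hz₁ hz₁₂)
      have := hp (q z₂) (q z₁) hd2 hc
      obtain ⟨_, he₁⟩ := hq₂ z₁ (by rw [hmin]; exact hz₁.le)
      obtain ⟨_, he₂⟩ := hq₂ z₂ (by rw [hmin]; exact (lt_of_lt_of_le hz₁ hz₁₂).le)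
      rw [he₁, he₂] at this
      linarith
    have hsqpos : ∀ z : ℝ, γ < z → 0 < q z ^ 2 - δ ^ 2 := by
      intro z hz
      have h := hqδ z hz
      nlinarith
    constructor
    · intro z hz
      rw [hmin] at hz
      rw [hg]
      have hz0 : 0 < z := by linarith
      have hs := hsqpos z hz
      have hq0 : 0 < q z := lt_trans hδ (hqδ z hz)
      have h2 : 0 < δ * q z ^ 2 / (q z ^ 2 - δ ^ 2) := by positivity
      have h1z : 0 < 1 / z := by positivity
      linarith
    · intro a ha b hb hab
      rw [hmin] at ha hb
      simp only [Set.mem_Ioi] at ha hb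
      rw [hg, hg]
      have ha0 : 0 < a := by linarith
      have hqa : δ < q a := hqδ a ha
      have hqb : δ < q b := hqδ b hb
      have hA : 0 < q a ^ 2 - δ ^ 2 := hsqpos a ha
      have hB : 0 < q b ^ 2 - δ ^ 2 := hsqpos b hb
      have hqab : q a ≤ q b := hqmono a b ha hab
      have h1 : 1 / b ≤ 1 / a := one_div_le_one_div_of_le ha0 hab
      have h2 : δ * q b ^ 2 / (q b ^ 2 - δ ^ 2) ≤ δ * q a ^ 2 / (q a ^ 2 - δ ^ 2) := by
        rw [div_le_div_iff₀ hB hA]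
        nlinarith [mul_le_mul_of_nonneg_left
          (mul_le_mul hqab hqab (by linarith) (by linarith)) (sq_nonneg δ)]
      linarith
end

section
/- For every δ > 0 the function Ψ_δ is strictly convex on (γ_δ, ∞). -/
/-!
Write `Ψ = 1 / G` with `G z = e^z (φ(z - log q z) - φ z)`, where `q = p_δ⁻¹`. Since
`φ' x = -1 / (x e^x)`, `q' = q² / (q - δ)` and `z - log q z = 1 + δ / q z`, one finds
`G' = G + s` with `s z = 1 / z + δ q² / (q² - δ²) ≥ 0`, and `s` is decreasing because `q` is
increasing. Hence `G` is increasing and `(1 / G)' = -1 / G - s / G²` is strictly increasing.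
-/

open Real MeasureTheory Set Filter Topology

theorem hasDerivAt_integral_Ioi {E : Type*} [NormedAddCommGroup E] [NormedSpace ℝ E]
    [CompleteSpace E] {f : ℝ → E} {a x : ℝ} (hf : IntegrableOn f (Ioi a)) (hax : a < x)
    (hfx : ContinuousAt f x) :
    HasDerivAt (fun y => ∫ u in Ioi y, f u) (-f x) x := by
  have hFTC : HasDerivAt (fun y => ∫ u in a..y, f u) (f x) x :=
    intervalIntegral.integral_hasDerivAt_right
      ((intervalIntegrable_iff_integrableOn_Ioc_of_le hax.le).2 (hf.mono_set Ioc_subset_Ioi_self))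
      (AEStronglyMeasurable.stronglyMeasurableAtFilter_of_mem hf.aestronglyMeasurable
        (Ioi_mem_nhds hax)) hfx
  refine (hFTC.const_sub (∫ u in Ioi a, f u)).congr_of_eventuallyEq ?_
  filter_upwards [Ioi_mem_nhds hax] with y hy
  rw [← intervalIntegral.integral_Ioi_sub_Ioi hf hy.le, sub_sub_cancel]

theorem strictConvexOn_inv_of_hasDerivAt_eq_add {D : Set ℝ} (hD : Convex ℝ D) (hDo : IsOpen D)
    {G s : ℝ → ℝ} (hG : ∀ x ∈ D, 0 < G x) (hs : ∀ x ∈ D, 0 ≤ s x) (hs_anti : AntitoneOn s D)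
    (hGd : ∀ x ∈ D, HasDerivAt G (G x + s x) x) :
    StrictConvexOn ℝ D (fun x => (G x)⁻¹) := by
  have hG_mono : StrictMonoOn G D := strictMonoOn_of_deriv_pos hD
    (fun x hx => (hGd x hx).continuousAt.continuousWithinAt) fun x hx => by
      rw [hDo.interior_eq] at hx
      rw [(hGd x hx).deriv]
      exact add_pos_of_pos_of_nonneg (hG x hx) (hs x hx)
  have hderiv : ∀ x ∈ D, HasDerivAt (fun x => (G x)⁻¹) (-((G x)⁻¹ + s x / G x ^ 2)) x := by
    intro x hx
    have hGx := (hG x hx).ne'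
    refine ((hGd x hx).inv hGx).congr_deriv ?_
    field_simp
  refine StrictMonoOn.strictConvexOn_of_deriv hD
    (fun x hx => (hderiv x hx).continuousAt.continuousWithinAt) ?_
  rw [hDo.interior_eq]
  intro x hx y hy hxy
  have hGxy := hG_mono hx hy hxy
  have := hG x hx
  have := hs x hx
  have := hs_anti hx hy hxy.le
  rw [(hderiv x hx).deriv, (hderiv y hy).deriv, neg_lt_neg_iff]
  exact add_lt_add_of_lt_of_le (by gcongr) (by gcongr)

section RightInverse

variable {f g : ℝ → ℝ} {a : ℝ}

theorem lt_of_mapsTo_Ici_of_rightInvOn (hg : MapsTo g (Ici (f a)) (Ici a))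
    (hfg : RightInvOn g f (Ici (f a))) {z : ℝ} (hz : f a < z) : a < g z := by
  refine (hg hz.le).lt_of_ne fun h => hz.ne ?_
  rw [h, hfg hz.le]

theorem StrictMonoOn.strictMonoOn_of_rightInvOn (hf : StrictMonoOn f (Ici a))
    (hg : MapsTo g (Ici (f a)) (Ici a)) (hfg : RightInvOn g f (Ici (f a))) :
    StrictMonoOn g (Ici (f a)) := by
  intro z hz w hw hzw
  rw [← hf.lt_iff_lt (hg hz) (hg hw), hfg hz, hfg hw]
  exact hzw

theorem StrictMonoOn.image_Ioi_of_rightInvOn (hf : StrictMonoOn f (Ici a))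
    (hg : MapsTo g (Ici (f a)) (Ici a)) (hfg : RightInvOn g f (Ici (f a))) :
    g '' Ioi (f a) = Ioi a := by
  refine Subset.antisymm
    (image_subset_iff.2 fun z hz => lt_of_mapsTo_Ici_of_rightInvOn hg hfg hz)
    fun y (hy : a < y) => ⟨f y, hf self_mem_Ici hy.le hy, ?_⟩
  have hfy : f a ≤ f y := hf.monotoneOn self_mem_Ici hy.le hy.le
  exact hf.injOn (hg hfy) hy.le (hfg hfy)

theorem StrictMonoOn.continuousAt_of_rightInvOn (hf : StrictMonoOn f (Ici a))
    (hg : MapsTo g (Ici (f a)) (Ici a)) (hfg : RightInvOn g f (Ici (f a))) {z : ℝ}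
    (hz : f a < z) : ContinuousAt g z := by
  refine continuousAt_of_monotoneOn_of_image_mem_nhds
    ((hf.strictMonoOn_of_rightInvOn hg hfg).monotoneOn.mono Ioi_subset_Ici_self)
    (Ioi_mem_nhds hz) ?_
  rw [hf.image_Ioi_of_rightInvOn hg hfg]
  exact Ioi_mem_nhds (lt_of_mapsTo_Ici_of_rightInvOn hg hfg hz)

theorem StrictMonoOn.hasDerivAt_of_rightInvOn (hf : StrictMonoOn f (Ici a))
    (hg : MapsTo g (Ici (f a)) (Ici a)) (hfg : RightInvOn g f (Ici (f a))) {z f' : ℝ}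
    (hz : f a < z) (hf' : HasDerivAt f f' (g z)) (hf'0 : f' ≠ 0) :
    HasDerivAt g f'⁻¹ z := by
  refine hf'.of_local_left_inverse (hf.continuousAt_of_rightInvOn hg hfg hz) hf'0 ?_
  filter_upwards [Ioi_mem_nhds hz] with w hw
  exact hfg (Ioi_subset_Ici_self hw)

end RightInverse

namespace PsiDelta

theorem integrableOn_Ioi_one_div_mul_exp {a : ℝ} (ha : 0 < a) :
    IntegrableOn (fun u => 1 / (u * exp u)) (Ioi a) := by
  refine ((exp_neg_integrableOn_Ioi a one_pos).const_mul a⁻¹).mono'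
    (by fun_prop : Measurable fun u : ℝ => 1 / (u * exp u)).aestronglyMeasurable ?_
  filter_upwards [ae_restrict_mem measurableSet_Ioi] with u (hu : a < u)
  have hu0 : 0 < u := ha.trans hu
  rw [norm_of_nonneg (by positivity), neg_one_mul, exp_neg, one_div, mul_inv]
  gcongr

-- `φ` is the exponential integral `E₁ x = ∫_x^∞ e^{-u} / u du`.
section ExpIntegral

variable {φ : ℝ → ℝ}

theorem hasDerivAt_of_eq_expIntegral (hφ : ∀ x, φ x = ∫ u in Ioi x, 1 / (u * exp u))
    {x : ℝ} (hx : 0 < x) : HasDerivAt φ (-(1 / (x * exp x))) x := by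
  rw [show φ = _ from funext hφ]
  exact hasDerivAt_integral_Ioi (integrableOn_Ioi_one_div_mul_exp (half_pos hx)) (half_lt_self hx)
    (by fun_prop (disch := positivity))

theorem strictAntiOn_of_eq_expIntegral (hφ : ∀ x, φ x = ∫ u in Ioi x, 1 / (u * exp u)) :
    StrictAntiOn φ (Ioi 0) := by
  refine strictAntiOn_of_deriv_neg (convex_Ioi 0)
    (fun x hx => (hasDerivAt_of_eq_expIntegral hφ hx).continuousAt.continuousWithinAt)
    fun x hx => ?_
  rw [interior_Ioi] at hx
  rw [(hasDerivAt_of_eq_expIntegral hφ hx).deriv, neg_lt_zero]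
  exact one_div_pos.2 (mul_pos hx (exp_pos x))

end ExpIntegral

noncomputable def p (δ y : ℝ) : ℝ := 1 + δ / y + log y

theorem hasDerivAt_p (δ : ℝ) {y : ℝ} (hy : 0 < y) : HasDerivAt (p δ) ((y - δ) / y ^ 2) y := by
  have h := (((hasDerivAt_inv hy.ne').const_mul δ).const_add 1).add (hasDerivAt_log hy.ne')
  refine h.congr_deriv ?_
  field_simp
  ring

theorem strictMonoOn_p {δ : ℝ} (hδ : 0 < δ) : StrictMonoOn (p δ) (Ici δ) := by
  refine strictMonoOn_of_deriv_pos (convex_Ici δ)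
    (fun y (hy : δ ≤ y) => (hasDerivAt_p δ (hδ.trans_le hy)).continuousAt.continuousWithinAt)
    fun y hy => ?_
  rw [interior_Ici] at hy
  rw [(hasDerivAt_p δ (hδ.trans hy)).deriv]
  exact div_pos (sub_pos.2 hy) (pow_pos (hδ.trans hy) 2)

theorem min_le_p_max {δ : ℝ} (hδ : 0 < δ) : min (1 + δ) (2 + log δ) ≤ p δ (max δ 1) := by
  rcases max_choice δ 1 with h | h <;> rw [h, p]
  · rw [div_self hδ.ne']
    exact (min_le_right _ _).trans_eq (by ring)
  · simp

/-- The reciprocal `1 / Ψ_δ`. -/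
noncomputable def recip (φ q : ℝ → ℝ) (z : ℝ) : ℝ := exp z * (φ (z - log (q z)) - φ z)

noncomputable def drift (δ : ℝ) (q : ℝ → ℝ) (z : ℝ) : ℝ := 1 / z + δ * q z ^ 2 / (q z ^ 2 - δ ^ 2)

section Recip

variable {δ : ℝ} {φ q : ℝ → ℝ}

theorem recip_pos (hφ : ∀ x, φ x = ∫ u in Ioi x, 1 / (u * exp u)) (hδ : 0 ≤ δ) {z : ℝ}
    (hq : 1 < q z) (hpq : p δ (q z) = z) : 0 < recip φ q z := by
  have hA : z - log (q z) = 1 + δ / q z := by rw [p] at hpq; linarith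
  have hA0 : 0 < z - log (q z) := by rw [hA]; positivity
  have hAz : z - log (q z) < z := sub_lt_self z (log_pos hq)
  exact mul_pos (exp_pos z)
    (sub_pos.2 (strictAntiOn_of_eq_expIntegral hφ hA0 (hA0.trans hAz) hAz))

theorem hasDerivAt_recip (hφ : ∀ x, φ x = ∫ u in Ioi x, 1 / (u * exp u)) (hδ : 0 < δ) {z : ℝ}
    (hz : 0 < z) (hq : δ < q z) (hpq : p δ (q z) = z)
    (hq' : HasDerivAt q (q z ^ 2 / (q z - δ)) z) :
    HasDerivAt (recip φ q) (recip φ q z + drift δ q z) z := by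
  have hq0 : 0 < q z := hδ.trans hq
  have hA : z - log (q z) = 1 + δ / q z := by rw [p] at hpq; linarith
  have hA0 : 0 < z - log (q z) := by rw [hA]; positivity
  have hexpA : exp (1 + δ / q z) = exp z / q z := by rw [← hA, exp_sub, exp_log hq0]
  have hφA := (hasDerivAt_of_eq_expIntegral hφ hA0).comp z
    ((hasDerivAt_id z).sub (hq'.log hq0.ne'))
  have hφz := hasDerivAt_of_eq_expIntegral hφ hz
  refine ((hasDerivAt_exp z).mul (hφA.sub hφz)).congr_deriv ?_
  have hqδ : q z - δ ≠ 0 := (sub_pos.2 hq).ne'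
  have hqδ' : q z ^ 2 - δ ^ 2 ≠ 0 := by nlinarith
  simp only [recip, drift, Function.comp_apply, Pi.sub_apply, id]
  generalize φ (z - log (q z)) - φ z = D
  rw [hA, hexpA]
  field_simp
  ring

theorem drift_nonneg (hδ : 0 < δ) {z : ℝ} (hz : 0 < z) (hq : δ < q z) : 0 ≤ drift δ q z := by
  have : 0 < q z ^ 2 - δ ^ 2 := by nlinarith
  unfold drift
  positivity

theorem antitoneOn_drift (hδ : 0 < δ) {c : ℝ} (hc : 0 ≤ c) (hq : ∀ z ∈ Ioi c, δ < q z)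
    (hq_mono : MonotoneOn q (Ioi c)) : AntitoneOn (drift δ q) (Ioi c) := by
  intro z (hz : c < z) w (hw : c < w) hzw
  have hqz := hq z hz
  have hqzw : q z ≤ q w := hq_mono hz hw hzw
  have hz' : 0 < q z ^ 2 - δ ^ 2 := by nlinarith
  have hw' : 0 < q w ^ 2 - δ ^ 2 := by nlinarith
  refine add_le_add (one_div_le_one_div_of_le (hc.trans_lt hz) hzw) ?_
  rw [div_le_div_iff₀ hw' hz']
  have hsq : q z ^ 2 ≤ q w ^ 2 := pow_le_pow_left₀ (hδ.trans hqz).le hqzw 2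
  nlinarith [pow_pos hδ 3]

end Recip

theorem strictConvexOn_exp_neg_div {δ Γ : ℝ} {φ q : ℝ → ℝ} (hδ : 0 < δ) (hδΓ : δ ≤ Γ)
    (hΓ : 1 ≤ Γ) (hφ : ∀ x, φ x = ∫ u in Ioi x, 1 / (u * exp u))
    (hq : MapsTo q (Ici (p δ Γ)) (Ici Γ)) (hpq : RightInvOn q (p δ) (Ici (p δ Γ))) :
    StrictConvexOn ℝ (Ioi (p δ Γ)) (fun z => exp (-z) / (φ (z - log (q z)) - φ z)) := by
  have hp : StrictMonoOn (p δ) (Ici Γ) := (strictMonoOn_p hδ).mono (Ici_subset_Ici.2 hδΓ)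
  have hpΓ : 0 < p δ Γ := by
    have := log_nonneg hΓ
    have := hδ.trans_le hδΓ
    unfold p
    positivity
  have hδq : ∀ z ∈ Ioi (p δ Γ), δ < q z := fun z hz =>
    hδΓ.trans_lt (lt_of_mapsTo_Ici_of_rightInvOn hq hpq hz)
  have hq' : ∀ z ∈ Ioi (p δ Γ), HasDerivAt q (q z ^ 2 / (q z - δ)) z := by
    intro z hz
    have hqz := hδq z hz
    have hp' : (q z - δ) / q z ^ 2 ≠ 0 :=
      (div_pos (sub_pos.2 hqz) (pow_pos (hδ.trans hqz) 2)).ne'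
    simpa only [inv_div] using
      hp.hasDerivAt_of_rightInvOn hq hpq hz (hasDerivAt_p δ (hδ.trans hqz)) hp'
  have hΨ : (fun z => exp (-z) / (φ (z - log (q z)) - φ z)) = fun z => (recip φ q z)⁻¹ := by
    funext z
    rw [recip, mul_inv, exp_neg, div_eq_mul_inv]
  rw [hΨ]
  refine strictConvexOn_inv_of_hasDerivAt_eq_add (convex_Ioi _) isOpen_Ioi
    (fun z hz => recip_pos hφ hδ.le (hΓ.trans_lt (lt_of_mapsTo_Ici_of_rightInvOn hq hpq hz))
      (hpq (Ioi_subset_Ici_self hz)))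
    (fun z hz => drift_nonneg hδ (hpΓ.trans hz) (hδq z hz))
    (antitoneOn_drift hδ hpΓ.le hδq
      ((hp.strictMonoOn_of_rightInvOn hq hpq).monotoneOn.mono Ioi_subset_Ici_self))
    fun z hz => hasDerivAt_recip hφ hδ (hpΓ.trans hz) (hδq z hz)
      (hpq (Ioi_subset_Ici_self hz)) (hq' z hz)

end PsiDelta

open PsiDelta

theorem stmt_9_general (δ : ℝ) (hδ : 0 < δ)
    (φ : ℝ → ℝ) (hφ : ∀ x : ℝ, φ x = ∫ u in Set.Ioi x, 1 / (u * Real.exp u))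
    (q : ℝ → ℝ)
    (hq₂ : ∀ z : ℝ, min (1 + δ) (2 + Real.log δ) ≤ z →
      max δ 1 ≤ q z ∧ 1 + δ / q z + Real.log (q z) = z)
    (Ψ : ℝ → ℝ)
    (hΨ : ∀ z : ℝ, Ψ z = Real.exp (-z) / (φ (z - Real.log (q z)) - φ z)) :
    StrictConvexOn ℝ (Set.Ioi (min (1 + δ) (2 + Real.log δ))) Ψ := by
  have hp : StrictMonoOn (p δ) (Ici (max δ 1)) :=
    (strictMonoOn_p hδ).mono (Ici_subset_Ici.2 (le_max_left δ 1))
  have hγ : p δ (max δ 1) = min (1 + δ) (2 + log δ) := by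
    obtain ⟨hΓq, hpq⟩ := hq₂ _ le_rfl
    refine le_antisymm ?_ (min_le_p_max hδ)
    calc p δ (max δ 1) ≤ p δ (q _) := hp.monotoneOn self_mem_Ici hΓq hΓq
      _ = _ := hpq
  rw [← hγ] at hq₂ ⊢
  rw [show Ψ = _ from funext hΨ]
  exact strictConvexOn_exp_neg_div hδ (le_max_left δ 1) (le_max_right δ 1) hφ
    (fun z hz => (hq₂ z hz).1) fun z hz => (hq₂ z hz).2

theorem stmt_9 (δ : ℝ) (hδ : 0 < δ)
    (φ : ℝ → ℝ) (hφ : ∀ x : ℝ, φ x = ∫ u in Set.Ioi x, 1 / (u * Real.exp u))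
    (q : ℝ → ℝ)
    (hq₁ : ∀ y : ℝ, max δ 1 ≤ y → q (1 + δ / y + Real.log y) = y)
    (hq₂ : ∀ z : ℝ, min (1 + δ) (2 + Real.log δ) ≤ z →
      max δ 1 ≤ q z ∧ 1 + δ / q z + Real.log (q z) = z)
    (Ψ : ℝ → ℝ)
    (hΨ : ∀ z : ℝ, Ψ z = Real.exp (-z) / (φ (z - Real.log (q z)) - φ z)) :
    StrictConvexOn ℝ (Set.Ioi (min (1 + δ) (2 + Real.log δ))) Ψ :=
  stmt_9_general δ hδ φ hφ q hq₂ Ψ hΨ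
end

section
/- Let ℓ < i be real numbers, let ρ : [ℓ, i] → (0,∞) be continuous, and let H : [ℓ, i] → (0,∞) be continuously differentiable with H' > 0 on [ℓ, i]. Then ∫_ℓ^i ρ(z) H(z) e^{H(z)} / H'(z) dz ≥ ( ∫_ℓ^i √(ρ(z)) dz )² / ( φ(H(ℓ)) − φ(H(i)) ). -/
open MeasureTheory Set Real

/-! With `w = H' / (H e^H)` the right-hand integrand is `ρ / w` and `√ρ = √(ρ / w) · √w`, so
Cauchy–Schwarz gives `(∫ √ρ)² ≤ (∫ ρ / w) (∫ w)`. Substituting `u = H z` turns `∫ w` into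
`∫_{H ℓ}^{H i} du / (u e^u) = φ(H ℓ) − φ(H i)`. -/

theorem sq_integral_sqrt_mul_sqrt_le {α : Type*} [MeasurableSpace α] {μ : Measure α}
    {f g : α → ℝ} (hf0 : 0 ≤ᵐ[μ] f) (hg0 : 0 ≤ᵐ[μ] g) (hf : Integrable f μ)
    (hg : Integrable g μ) :
    (∫ x, √(f x) * √(g x) ∂μ) ^ 2 ≤ (∫ x, f x ∂μ) * ∫ x, g x ∂μ := by
  have memLp_sqrt {h : α → ℝ} (h0 : 0 ≤ᵐ[μ] h) (hh : Integrable h μ) :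
      MemLp (fun x => √(h x)) (ENNReal.ofReal 2) μ := by
    rw [ENNReal.ofReal_ofNat, memLp_two_iff_integrable_sq
      (continuous_sqrt.comp_aestronglyMeasurable hh.aestronglyMeasurable)]
    exact hh.congr (h0.mono fun x hx => (sq_sqrt hx).symm)
  have integral_sqrt_rpow {h : α → ℝ} (h0 : 0 ≤ᵐ[μ] h) :
      ∫ x, √(h x) ^ (2 : ℝ) ∂μ = ∫ x, h x ∂μ :=
    integral_congr_ae (h0.mono fun x hx => by simp [rpow_ofNat, sq_sqrt hx])
  have holder := integral_mul_le_Lp_mul_Lq_of_nonneg Real.HolderConjugate.two_two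
    (.of_forall fun x => sqrt_nonneg (f x)) (.of_forall fun x => sqrt_nonneg (g x))
    (memLp_sqrt hf0 hf) (memLp_sqrt hg0 hg)
  rw [integral_sqrt_rpow hf0, integral_sqrt_rpow hg0, ← sqrt_eq_rpow, ← sqrt_eq_rpow] at holder
  calc (∫ x, √(f x) * √(g x) ∂μ) ^ 2
      ≤ (√(∫ x, f x ∂μ) * √(∫ x, g x ∂μ)) ^ 2 :=
        pow_le_pow_left₀ (integral_nonneg fun x => by positivity) holder 2
    _ = (∫ x, f x ∂μ) * ∫ x, g x ∂μ := by
        rw [mul_pow, sq_sqrt (integral_nonneg_of_ae hf0), sq_sqrt (integral_nonneg_of_ae hg0)]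

theorem sq_intervalIntegral_sqrt_mul_sqrt_le {a b : ℝ} {μ : Measure ℝ} {f g : ℝ → ℝ}
    (hab : a ≤ b) (hf0 : ∀ x ∈ Ioc a b, 0 ≤ f x) (hg0 : ∀ x ∈ Ioc a b, 0 ≤ g x)
    (hf : IntervalIntegrable f μ a b) (hg : IntervalIntegrable g μ a b) :
    (∫ x in a..b, √(f x) * √(g x) ∂μ) ^ 2 ≤
      (∫ x in a..b, f x ∂μ) * ∫ x in a..b, g x ∂μ := by
  simp only [intervalIntegral.integral_of_le hab]
  exact sq_integral_sqrt_mul_sqrt_le ((ae_restrict_iff' measurableSet_Ioc).2 (.of_forall hf0))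
    ((ae_restrict_iff' measurableSet_Ioc).2 (.of_forall hg0)) hf.1 hg.1

theorem integral_comp_mul_deriv_Icc {a b : ℝ} {f f' g : ℝ → ℝ} (hab : a ≤ b)
    (hf : ∀ x ∈ Icc a b, HasDerivWithinAt f (f' x) (Icc a b) x)
    (hf' : ContinuousOn f' (Icc a b)) (hg : ContinuousOn g (f '' Icc a b)) :
    ∫ x in a..b, g (f x) * f' x = ∫ u in f a..f b, g u := by
  rw [← uIcc_of_le hab] at hf' hg
  refine intervalIntegral.integral_comp_mul_deriv'' ?_ (fun x hx => ?_) hf' hg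
  · rw [uIcc_of_le hab]
    exact fun x hx => (hf x hx).continuousWithinAt
  · rw [min_eq_left hab, max_eq_right hab] at hx
    exact ((hf x (Ioo_subset_Icc_self hx)).hasDerivAt (Icc_mem_nhds hx.1 hx.2)).hasDerivWithinAt

theorem sq_integral_sqrt_div_integral_le_integral_div {a b : ℝ} {f w : ℝ → ℝ}
    (hab : a ≤ b) (hf : ContinuousOn f (Icc a b)) (hw : ContinuousOn w (Icc a b))
    (hf0 : ∀ x ∈ Icc a b, 0 ≤ f x) (hw0 : ∀ x ∈ Icc a b, 0 < w x) :
    (∫ x in a..b, √(f x)) ^ 2 / ∫ x in a..b, w x ≤ ∫ x in a..b, f x / w x := by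
  have hfw0 : ∀ x ∈ Icc a b, 0 ≤ f x / w x := fun x hx => div_nonneg (hf0 x hx) (hw0 x hx).le
  have hsqrt : ∀ x ∈ uIcc a b, √(f x) = √(f x / w x) * √(w x) := fun x hx => by
    rw [uIcc_of_le hab] at hx
    rw [← sqrt_mul (hfw0 x hx), div_mul_cancel₀ _ (hw0 x hx).ne']
  have hcs := sq_intervalIntegral_sqrt_mul_sqrt_le (μ := volume) hab
    (fun x hx => hfw0 x (Ioc_subset_Icc_self hx)) (fun x hx => (hw0 x (Ioc_subset_Icc_self hx)).le)
    ((hf.div hw fun x hx => (hw0 x hx).ne').intervalIntegrable_of_Icc hab)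
    (hw.intervalIntegrable_of_Icc hab)
  rw [← intervalIntegral.integral_congr hsqrt] at hcs
  exact div_le_of_le_mul₀ (intervalIntegral.integral_nonneg hab fun x hx => (hw0 x hx).le)
    (intervalIntegral.integral_nonneg hab hfw0) hcs

theorem stmt_13
    (φ : ℝ → ℝ) (hφ : ∀ x : ℝ, φ x = ∫ u in Set.Ioi x, 1 / (u * Real.exp u))
    (ℓ i : ℝ) (hℓi : ℓ < i) (ρ H H' : ℝ → ℝ)
    (hρc : ContinuousOn ρ (Set.Icc ℓ i))
    (hρpos : ∀ z ∈ Set.Icc ℓ i, 0 < ρ z)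
    (hH : ∀ z ∈ Set.Icc ℓ i, HasDerivWithinAt H (H' z) (Set.Icc ℓ i) z)
    (hH'c : ContinuousOn H' (Set.Icc ℓ i))
    (hHpos : ∀ z ∈ Set.Icc ℓ i, 0 < H z)
    (hH'pos : ∀ z ∈ Set.Icc ℓ i, 0 < H' z) :
    (∫ z in ℓ..i, Real.sqrt (ρ z)) ^ 2 / (φ (H ℓ) - φ (H i)) ≤
      ∫ z in ℓ..i, ρ z * H z * Real.exp (H z) / H' z := by
  have hle := hℓi.le
  have hHc : ContinuousOn H (Icc ℓ i) := fun z hz => (hH z hz).continuousWithinAt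
  have hk : ContinuousOn (fun u => 1 / (u * exp u)) (H '' Icc ℓ i) := by
    refine continuousOn_const.div (continuousOn_id.mul continuous_exp.continuousOn) ?_
    rintro _ ⟨z, hz, rfl⟩
    exact (mul_pos (hHpos z hz) (exp_pos _)).ne'
  have hφw : φ (H ℓ) - φ (H i) = ∫ z in ℓ..i, 1 / (H z * exp (H z)) * H' z := by
    rw [hφ, hφ, intervalIntegral.integral_Ioi_sub_Ioi'
      (integrableOn_one_div_mul_exp_Ioi (hHpos ℓ (left_mem_Icc.2 hle)))
      (integrableOn_one_div_mul_exp_Ioi (hHpos i (right_mem_Icc.2 hle))),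
      integral_comp_mul_deriv_Icc hle hH hH'c hk]
  have hρw : ∀ z ∈ uIcc ℓ i,
      ρ z / (1 / (H z * exp (H z)) * H' z) = ρ z * H z * exp (H z) / H' z :=
    fun z _ => by field_simp
  rw [hφw, ← intervalIntegral.integral_congr hρw]
  exact sq_integral_sqrt_div_integral_le_integral_div hle hρc
    ((hk.comp hHc (mapsTo_image H _)).mul hH'c) (fun z hz => (hρpos z hz).le)
    (fun z hz => mul_pos (one_div_pos.2 (mul_pos (hHpos z hz) (exp_pos _))) (hH'pos z hz))
end
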